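/- arXiv:2604.08274 — 4 statements merged into one kernel-verified Lean document; each statement's English description precedes it below -/
import Mathlib

section
/- Let (P, N) be a matched pair for a locally compact group G with actions α : P × N → N and β : N × P → P satisfying p n⁻¹ = α_p(n)⁻¹ β_n(p), let χ : N → 𝕋 be a character, set α̃_p(n) := (α_p(n⁻¹))⁻¹, β̃_n(p) := (β_n(p⁻¹))⁻¹, and define 𝔼(p, n) := χ(α̃_{p⁻¹}(n)). Then 𝔼(p̃⁻¹p, n) = 𝔼(p, α̃_{p̃}(n)) and 𝔼(p, ñ⁻¹n) = 𝔼(p, ñ⁻¹)·𝔼(β̃_{ñ}(p), n) whenever the relevant factorizations exist. -/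
/-- For a matched pair `(P, N)` in `G` with dressing actions `α, β` defined by
`p n⁻¹ = α_p(n)⁻¹ β_n(p)`, a character `χ : N → 𝕋`, and the Fourier kernel
`𝔼(p, n) := χ(α̃_{p⁻¹}(n))` with `α̃_p(n) = α_p(n⁻¹)⁻¹`, `β̃_n(p) = β_n(p⁻¹)⁻¹`, one has
`𝔼(p̃⁻¹p, n) = 𝔼(p, α̃_{p̃}(n))` and `𝔼(p, ñ⁻¹n) = 𝔼(p, ñ⁻¹)·𝔼(β̃_{ñ}(p), n)`. -/
theorem fourier_kernel_identities {G : Type*} [Group G] (P N : Subgroup G)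
    (α : P → N → N) (β : N → P → P)
    (hdisj : P ⊓ N = ⊥)
    (hfac : ∀ (p : P) (n : N),
      (p : G) * (n : G)⁻¹ = ((α p n : G))⁻¹ * (β n p : G))
    (χ : N →* Circle)
    (αt : P → N → N) (βt : N → P → P)
    (hαt : ∀ p n, αt p n = (α p n⁻¹)⁻¹)
    (hβt : ∀ n p, βt n p = (β n p⁻¹)⁻¹)
    (E : P → N → Circle)
    (hE : ∀ p n, E p n = χ (αt p⁻¹ n)) :
    (∀ (p pt : P) (n : N), E (pt⁻¹ * p) n = E p (αt pt n)) ∧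
    (∀ (p : P) (n nt : N), E p (nt⁻¹ * n) = E p nt⁻¹ * E (βt nt p) n) := by
  -- factorization: p n = αt_p(n) · β_{n⁻¹}(p)
  have key : ∀ (p : P) (n : N), (p : G) * n = (αt p n : G) * (β n⁻¹ p : G) := by
    intro p n
    rw [hαt]
    have h := hfac p n⁻¹
    push_cast at h ⊢
    simpa using h
  -- uniqueness of factorization
  have uniq : ∀ (x y : N) (u v : P), (x : G) * u = (y : G) * v → x = y := by
    intro x y u v h
    have h2 : ((y⁻¹ * x : N) : G) = (v : G) * (u : G)⁻¹ := by
      push_cast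
      calc (y : G)⁻¹ * x = (y : G)⁻¹ * ((x : G) * u) * (u : G)⁻¹ := by group
        _ = (y : G)⁻¹ * ((y : G) * v) * (u : G)⁻¹ := by rw [h]
        _ = (v : G) * (u : G)⁻¹ := by group
    have hmem : ((y⁻¹ * x : N) : G) ∈ P ⊓ N := by
      refine ⟨?_, (y⁻¹ * x).2⟩
      rw [h2]; exact P.mul_mem v.2 (P.inv_mem u.2)
    rw [hdisj] at hmem
    have h1 : (y⁻¹ * x : N) = 1 := by
      ext; exact hmem
    have := mul_eq_one_iff_inv_eq.mp h1
    simpa [eq_comm] using congrArg (·⁻¹) this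
  -- αt is a left action
  have actA : ∀ (p q : P) (n : N), αt (p * q) n = αt p (αt q n) := by
    intro p q n
    apply uniq _ _ (β n⁻¹ (p * q)) (β (αt q n)⁻¹ p * β n⁻¹ q)
    calc (αt (p * q) n : G) * (β n⁻¹ (p * q) : G) = ((p * q : P) : G) * n := (key _ _).symm
      _ = (p : G) * ((q : G) * n) := by push_cast; group
      _ = (p : G) * ((αt q n : G) * (β n⁻¹ q : G)) := by rw [key]
      _ = ((p : G) * (αt q n : G)) * (β n⁻¹ q : G) := by group
      _ = ((αt p (αt q n) : G) * (β (αt q n)⁻¹ p : G)) * (β n⁻¹ q : G) := by rw [key]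
      _ = (αt p (αt q n) : G) * ((β (αt q n)⁻¹ p * β n⁻¹ q : P) : G) := by push_cast; group
  -- compatibility of αt with products in N
  have actB : ∀ (p : P) (m n : N), αt p (m * n) = αt p m * αt (β m⁻¹ p) n := by
    intro p m n
    apply uniq _ _ (β (m * n)⁻¹ p) (β n⁻¹ (β m⁻¹ p))
    calc (αt p (m * n) : G) * (β (m * n)⁻¹ p : G) = (p : G) * ((m * n : N) : G) := (key _ _).symm
      _ = ((p : G) * m) * n := by push_cast; group
      _ = ((αt p m : G) * (β m⁻¹ p : G)) * n := by rw [key]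
      _ = (αt p m : G) * ((β m⁻¹ p : G) * n) := by group
      _ = (αt p m : G) * ((αt (β m⁻¹ p) n : G) * (β n⁻¹ (β m⁻¹ p) : G)) := by rw [key]
      _ = ((αt p m * αt (β m⁻¹ p) n : N) : G) * (β n⁻¹ (β m⁻¹ p) : G) := by push_cast; group
  constructor
  · intro p pt n
    rw [hE, hE]
    congr 1
    rw [mul_inv_rev, inv_inv, actA]
  · intro p n nt
    rw [hE, hE, hE]
    have h1 : αt p⁻¹ (nt⁻¹ * n) = αt p⁻¹ nt⁻¹ * αt (β nt p⁻¹) n := by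
      simpa using actB p⁻¹ nt⁻¹ n
    have h2 : (βt nt p)⁻¹ = β nt p⁻¹ := by rw [hβt, inv_inv]
    rw [h1, map_mul, h2]
end

section
/- With the notation of the previous statement (matched pair (P,N), character χ on N, Fourier kernel 𝔼(p,n) = χ(α̃_{p⁻¹}(n))), one has 𝔼(β̃_n(p), n) = conj(𝔼(p, n⁻¹)) for all p ∈ P, n ∈ N for which the factorizations exist. -/
/-- With matched pair `(P, N)`, character `χ` on `N` and Fourier kernel
`𝔼(p,n) = χ(α̃_{p⁻¹}(n))`, one has `𝔼(β̃_n(p), n) = conj(𝔼(p, n⁻¹))`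
(complex conjugation on `𝕋` being inversion). -/
theorem fourier_kernel_conj {G : Type*} [Group G] (P N : Subgroup G)
    (α : P → N → N) (β : N → P → P)
    (hdisj : P ⊓ N = ⊥)
    (hfac : ∀ (p : P) (n : N),
      (p : G) * (n : G)⁻¹ = ((α p n : G))⁻¹ * (β n p : G))
    (χ : N →* Circle)
    (αt : P → N → N) (βt : N → P → P)
    (hαt : ∀ p n, αt p n = (α p n⁻¹)⁻¹)
    (hβt : ∀ n p, βt n p = (β n p⁻¹)⁻¹)
    (E : P → N → Circle)
    (hE : ∀ p n, E p n = χ (αt p⁻¹ n)) :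
    ∀ (p : P) (n : N), E (βt n p) n = (E p n⁻¹)⁻¹ := by
  intro p n
  have h1 := hfac p⁻¹ n
  have h2 := hfac (β n p⁻¹) n⁻¹
  -- key identity: α (β n p⁻¹) n⁻¹ = (α p⁻¹ n)⁻¹
  have key : α (β n p⁻¹) n⁻¹ = (α p⁻¹ n)⁻¹ := by
    set a := α p⁻¹ n with ha
    set b := α (β n p⁻¹) n⁻¹ with hb
    have hGeq : ((b : G) * (a : G)) = (β n⁻¹ (β n p⁻¹) : G) * (p : G) := by
      push_cast at h1 h2
      have hq : (β n p⁻¹ : G) = (a : G) * ((p : G)⁻¹ * (n : G)⁻¹) := by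
        rw [h1]; group
      rw [hq] at h2
      rw [show (a : G) * ((p : G)⁻¹ * (n : G)⁻¹) * ((n : G)⁻¹)⁻¹
            = (a : G) * (p : G)⁻¹ by group] at h2
      calc (b : G) * (a : G)
          = (b : G) * ((a : G) * (p : G)⁻¹) * (p : G) := by group
        _ = (b : G) * ((b : G)⁻¹ * (β n⁻¹ (β n p⁻¹) : G)) * (p : G) := by rw [h2]
        _ = (β n⁻¹ (β n p⁻¹) : G) * (p : G) := by group
    have hmemP : ((b : G) * (a : G)) ∈ P := by
      rw [hGeq]; exact mul_mem (β n⁻¹ (β n p⁻¹)).2 p.2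
    have hmemN : ((b : G) * (a : G)) ∈ N := mul_mem b.2 a.2
    have : ((b : G) * (a : G)) ∈ P ⊓ N := ⟨hmemP, hmemN⟩
    rw [hdisj, Subgroup.mem_bot] at this
    have : (b * a : N) = 1 := Subtype.ext (by push_cast; exact this)
    exact eq_inv_of_mul_eq_one_left this
  have hβ : (βt n p)⁻¹ = β n p⁻¹ := by rw [hβt, inv_inv]
  rw [hE, hE, hβ, hαt, hαt, inv_inv, key, inv_inv, map_inv, inv_inv]
end

section
/- In the setting of a matched pair (P, N) with actions α̃, β̃ and Fourier kernel 𝔼 built from a character χ on N, define Φ(p, n) := 𝔼(p,n)/𝔼(e,n). Then Φ satisfies the bi-1-cocycle relations Φ(p p̃, n) = Φ(p, n)·Φ(p̃, α̃_{p⁻¹}(n)) and Φ(p, n ñ) = Φ(p, n)·Φ(β̃_{n⁻¹}(p), ñ). -/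
/-!
Rewriting the matched-pair relation `p n⁻¹ = α_p(n)⁻¹ β_n(p)` at `n⁻¹` gives the factorization
`p n = α̃_p(n) · β_{n⁻¹}(p)` of `P N` into `N P`, which is unique since `P ∩ N = 1`. Computing
`(p p̃) n` and `p (n ñ)` in two ways then shows that `α̃` is a left action of `P` on `N` with
`α̃_p(n ñ) = α̃_p(n) · α̃_{β_{n⁻¹}(p)}(ñ)`. Since `𝔼(e, n) = χ(n)`, we have
`Φ(p, n) = χ(α̃_{p⁻¹}(n)) / χ(n)`, and applying the homomorphism `χ` to these two identities gives
the two cocycle relations.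
-/

namespace Subgroup

variable {G : Type*} [Group G] {P N : Subgroup G}

theorem eq_and_eq_of_coe_mul_eq (hdisj : P ⊓ N = ⊥) {n₁ n₂ : N} {p₁ p₂ : P}
    (h : (n₁ : G) * p₁ = n₂ * p₂) : n₁ = n₂ ∧ p₁ = p₂ :=
  Prod.ext_iff.mp <| mul_injective_of_disjoint (disjoint_iff.mpr (inf_comm P N ▸ hdisj))
    (a₁ := (n₁, p₁)) (a₂ := (n₂, p₂)) h

variable {a : P → N → N} {b : N → P → P}

theorem factorization_one_left (hdisj : P ⊓ N = ⊥)
    (hab : ∀ (p : P) (n : N), (p : G) * n = a p n * b n p) (n : N) : a 1 n = n := by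
  have h : (a 1 n : G) * b n 1 = n * (1 : P) := by
    rw [← hab, OneMemClass.coe_one, one_mul, mul_one]
  exact (eq_and_eq_of_coe_mul_eq hdisj h).1

theorem factorization_mul_left (hdisj : P ⊓ N = ⊥)
    (hab : ∀ (p : P) (n : N), (p : G) * n = a p n * b n p) (p q : P) (n : N) :
    a (p * q) n = a p (a q n) := by
  have h : (a (p * q) n : G) * b n (p * q) = a p (a q n) * (b (a q n) p * b n q : P) := by
    rw [← hab, coe_mul, coe_mul, mul_assoc, hab, ← mul_assoc, hab, mul_assoc]
  exact (eq_and_eq_of_coe_mul_eq hdisj h).1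

theorem factorization_mul_right (hdisj : P ⊓ N = ⊥)
    (hab : ∀ (p : P) (n : N), (p : G) * n = a p n * b n p) (p : P) (n m : N) :
    a p (n * m) = a p n * a (b n p) m := by
  have h : (a p (n * m) : G) * b (n * m) p = (a p n * a (b n p) m : N) * b m (b n p) := by
    rw [← hab, coe_mul, coe_mul, ← mul_assoc, hab, mul_assoc, hab, mul_assoc]
  exact (eq_and_eq_of_coe_mul_eq hdisj h).1

end Subgroup

/-- The normalized kernel `Φ(p, n) := 𝔼(p,n)/𝔼(e,n)` satisfies the bi-1-cocycle relations
`Φ(p p̃, n) = Φ(p, n)·Φ(p̃, α̃_{p⁻¹}(n))` and `Φ(p, n ñ) = Φ(p, n)·Φ(β̃_{n⁻¹}(p), ñ)`. -/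
theorem fourier_kernel_bicocycle {G : Type*} [Group G] (P N : Subgroup G)
    (α : P → N → N) (β : N → P → P)
    (hdisj : P ⊓ N = ⊥)
    (hfac : ∀ (p : P) (n : N),
      (p : G) * (n : G)⁻¹ = ((α p n : G))⁻¹ * (β n p : G))
    (χ : N →* Circle)
    (αt : P → N → N) (βt : N → P → P)
    (hαt : ∀ p n, αt p n = (α p n⁻¹)⁻¹)
    (hβt : ∀ n p, βt n p = (β n p⁻¹)⁻¹)
    (E : P → N → Circle)
    (hE : ∀ p n, E p n = χ (αt p⁻¹ n))
    (Φ : P → N → Circle)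
    (hΦ : ∀ p n, Φ p n = E p n / E 1 n) :
    (∀ (p pt : P) (n : N), Φ (p * pt) n = Φ p n * Φ pt (αt p⁻¹ n)) ∧
    (∀ (p : P) (n nt : N), Φ p (n * nt) = Φ p n * Φ (βt n⁻¹ p) nt) := by
  have hfac' : ∀ (p : P) (n : N), (p : G) * n = αt p n * β n⁻¹ p := fun p n => by
    rw [hαt, Subgroup.coe_inv, ← hfac, Subgroup.coe_inv, inv_inv]
  have hΦ' : ∀ p n, Φ p n = χ (αt p⁻¹ n) / χ n := fun p n => by
    rw [hΦ, hE, hE, inv_one, Subgroup.factorization_one_left hdisj hfac']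
  refine ⟨fun p pt n => ?_, fun p n nt => ?_⟩
  · rw [hΦ', hΦ', hΦ', mul_inv_rev, Subgroup.factorization_mul_left hdisj hfac',
      div_mul_div_cancel']
  · have hβt' : (βt n⁻¹ p)⁻¹ = β n⁻¹ p⁻¹ := by rw [hβt, inv_inv]
    rw [hΦ', hΦ', hΦ', hβt', Subgroup.factorization_mul_right hdisj hfac', map_mul, map_mul,
      mul_div_mul_comm]
end

section
/- In the group G = GL₂(ℝ) ⋉ ℝ², let p = ((a, b; 0, z), (0,0)) ∈ P (upper triangular linear part, zero translation) and n = ((1, 0; c, 1), (x, y)) ∈ N (lower unitriangular linear part with translation). Then, whenever a − bc ≠ 0, the dressing actions determined by n⁻¹ p = β_n(p) α_p(n)⁻¹-type factorization (equivalently p n⁻¹ = α_p(n)⁻¹β_n(p)) are given explicitly by β_n(p) = ((a−bc, b; 0, za/(a−bc)), (0,0)) and α_p(n) = ((1, 0; zc/(a−bc), 1), ((a−bc)x + by, (za/(a−bc))y)). -/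
open Matrix

theorem Matrix.mul_nonsing_inv_eq_nonsing_inv_mul_of_mul_eq {n R : Type*} [Fintype n]
    [DecidableEq n] [CommRing R] {A B P N : Matrix n n R} (hA : IsUnit A.det)
    (hN : IsUnit N.det) (h : A * P = B * N) : P * N⁻¹ = A⁻¹ * B :=
  calc P * N⁻¹ = A⁻¹ * (A * P) * N⁻¹ := by rw [nonsing_inv_mul_cancel_left _ _ hA]
    _ = A⁻¹ * B := by rw [h, ← Matrix.mul_assoc, mul_nonsing_inv_cancel_right _ _ hN]

theorem det_affine_lowerUnitriangular {R : Type*} [CommRing R] (c x y : R) :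
    (!![1, 0, x; c, 1, y; 0, 0, 1] : Matrix (Fin 3) (Fin 3) R).det = 1 := by
  simp [det_fin_three]

/-- Clearing the inverses turns `p n⁻¹ = α⁻¹ β` into the polynomial identity `α p = β n`. -/
theorem affine_dressing_mul_eq {K : Type*} [Field K] (a b z c x y : K) (habc : a - b * c ≠ 0) :
    !![1, 0, (a - b * c) * x + b * y;
        z * c / (a - b * c), 1, (z * a / (a - b * c)) * y;
        0, 0, 1] * !![a, b, 0; 0, z, 0; 0, 0, 1] =
      !![a - b * c, b, 0; 0, z * a / (a - b * c), 0; 0, 0, 1] *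
        !![1, 0, x; c, 1, y; 0, 0, 1] := by
  have entry₁₀ : z * c / (a - b * c) * a = z * a / (a - b * c) * c := by ring
  have entry₁₁ : z * c / (a - b * c) * b + z = z * a / (a - b * c) := by
    rw [div_mul_eq_mul_div, div_add' _ _ _ habc]
    ring
  rw [mul_fin_three, mul_fin_three]
  ext i j
  fin_cases i <;> fin_cases j <;> simp [entry₁₀, entry₁₁]

theorem gl2_affine_dressing_general (a b z c x y : ℝ)
    (habc : a - b * c ≠ 0) :
    (!![a, b, 0; 0, z, 0; 0, 0, 1] : Matrix (Fin 3) (Fin 3) ℝ) *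
        (!![1, 0, x; c, 1, y; 0, 0, 1] : Matrix (Fin 3) (Fin 3) ℝ)⁻¹ =
      (!![1, 0, (a - b * c) * x + b * y;
          z * c / (a - b * c), 1, (z * a / (a - b * c)) * y;
          0, 0, 1] : Matrix (Fin 3) (Fin 3) ℝ)⁻¹ *
        !![a - b * c, b, 0; 0, z * a / (a - b * c), 0; 0, 0, 1] :=
  mul_nonsing_inv_eq_nonsing_inv_mul_of_mul_eq
    (by rw [det_affine_lowerUnitriangular]; exact isUnit_one)
    (by rw [det_affine_lowerUnitriangular]; exact isUnit_one)
    (affine_dressing_mul_eq a b z c x y habc)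

/-- Explicit dressing actions for `G = GL₂(ℝ) ⋉ ℝ²` (realized as 3×3 affine matrices):
for `p = ((a,b;0,z), 0) ∈ P` and `n = ((1,0;c,1),(x,y)) ∈ N` with `a - bc ≠ 0`, the
factorization `p n⁻¹ = α_p(n)⁻¹ β_n(p)` holds with
`β_n(p) = ((a−bc, b; 0, za/(a−bc)), (0,0))` and
`α_p(n) = ((1, 0; zc/(a−bc), 1), ((a−bc)x + by, (za/(a−bc))y))`. -/
theorem gl2_affine_dressing (a b z c x y : ℝ)
    (ha : a ≠ 0) (hz : z ≠ 0) (habc : a - b * c ≠ 0) :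
    (!![a, b, 0; 0, z, 0; 0, 0, 1] : Matrix (Fin 3) (Fin 3) ℝ) *
        (!![1, 0, x; c, 1, y; 0, 0, 1] : Matrix (Fin 3) (Fin 3) ℝ)⁻¹ =
      (!![1, 0, (a - b * c) * x + b * y;
          z * c / (a - b * c), 1, (z * a / (a - b * c)) * y;
          0, 0, 1] : Matrix (Fin 3) (Fin 3) ℝ)⁻¹ *
        !![a - b * c, b, 0; 0, z * a / (a - b * c), 0; 0, 0, 1] :=
  gl2_affine_dressing_general a b z c x y habc
end
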